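/- Let d_1, …, d_n be positive real numbers and let D be the 2n×2n diagonal matrix D = diag(d_1,…,d_n,d_1,…,d_n). If U is a real symplectic 2n×2n matrix satisfying UᵀDU = D, then U commutes with J (UJ = JU) and U is orthogonal (UᵀU = I); that is, U belongs to the group U(n) = Sp(2n,ℝ) ∩ O(2n,ℝ) of symplectic rotations. -/

import Mathlib

open Matrix MeasureTheory
open scoped ComplexOrder

noncomputable section

/-- The standard symplectic matrix `J = [[0, I], [-I, 0]]` of size `2n`, indexed by
`Fin n ⊕ Fin n`: `Sum.inl j` is the coordinate `x_j` and `Sum.inr j` is `p_j`. -/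
def stdJ (n : ℕ) : Matrix (Fin n ⊕ Fin n) (Fin n ⊕ Fin n) ℝ :=
  Matrix.fromBlocks 0 1 (-1) 0

/-- A real `2n × 2n` matrix `S` is symplectic if `Sᵀ J S = J`. -/
def IsSymplectic {n : ℕ} (S : Matrix (Fin n ⊕ Fin n) (Fin n ⊕ Fin n) ℝ) : Prop :=
  Sᵀ * stdJ n * S = stdJ n

/-! Both `J` and `D = diag(d, d)` are forms preserved by `U`, so
`U⁻¹ = J⁻¹ Uᵀ J = D⁻¹ Uᵀ D` and `U` commutes with `J⁻¹ D = -J D`. As `J` and `D` commute,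
`(J D)² = -D²`, so `U` commutes with `D²`, hence with its positive square root `D`; cancelling `D`
gives `U J = J U`, and then `Uᵀ U J = Uᵀ J U = J` forces `Uᵀ U = 1`. -/

theorem stdJ_mul_self (n : ℕ) : stdJ n * stdJ n = -1 := by
  simp [stdJ, fromBlocks_multiply, ← fromBlocks_one, fromBlocks_neg]

theorem isUnit_stdJ (n : ℕ) : IsUnit (stdJ n) :=
  IsUnit.of_mul_eq_one (-stdJ n) (by rw [Matrix.mul_neg, stdJ_mul_self, neg_neg])

theorem inv_stdJ (n : ℕ) : (stdJ n)⁻¹ = -stdJ n :=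
  inv_eq_left_inv (by rw [Matrix.neg_mul, stdJ_mul_self, neg_neg])

theorem commute_stdJ_fromBlocks_diag {n : ℕ} (A : Matrix (Fin n) (Fin n) ℝ) :
    Commute (stdJ n) (fromBlocks A 0 0 A) := by
  simp [commute_iff_eq, stdJ, fromBlocks_multiply]

namespace Matrix

variable {ι R : Type*} [Fintype ι] [DecidableEq ι]

theorem mul_inv_mul_transpose_eq_inv [CommRing R] {U Q : Matrix ι ι R} (hQ : IsUnit Q)
    (hUQ : Uᵀ * Q * U = Q) : U * Q⁻¹ * Uᵀ = Q⁻¹ := by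
  have hQdet : IsUnit Q.det := (isUnit_iff_isUnit_det Q).mp hQ
  have hleft : (Q⁻¹ * Uᵀ * Q) * U = 1 := by
    rw [Matrix.mul_assoc, Matrix.mul_assoc, ← Matrix.mul_assoc Uᵀ, hUQ, nonsing_inv_mul _ hQdet]
  have hright : U * (Q⁻¹ * Uᵀ * Q) = 1 := mul_eq_one_comm.mp hleft
  calc U * Q⁻¹ * Uᵀ = U * (Q⁻¹ * Uᵀ * Q) * Q⁻¹ := by
        simp only [Matrix.mul_assoc, mul_nonsing_inv _ hQdet, Matrix.mul_one]
    _ = Q⁻¹ := by rw [hright, Matrix.one_mul]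

theorem commute_inv_mul_of_transpose_mul_mul_eq [CommRing R] {U P Q : Matrix ι ι R}
    (hQ : IsUnit Q) (hUP : Uᵀ * P * U = P) (hUQ : Uᵀ * Q * U = Q) : Commute U (Q⁻¹ * P) :=
  calc U * (Q⁻¹ * P) = U * Q⁻¹ * (Uᵀ * P * U) := by rw [hUP, Matrix.mul_assoc]
    _ = (U * Q⁻¹ * Uᵀ) * P * U := by simp only [Matrix.mul_assoc]
    _ = Q⁻¹ * P * U := by rw [mul_inv_mul_transpose_eq_inv hQ hUQ]

theorem commute_diagonal_of_commute_diagonal_sq [CommRing R] [LinearOrder R]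
    [IsStrictOrderedRing R] {A : Matrix ι ι R} {d : ι → R} (hd : ∀ i, 0 ≤ d i)
    (h : Commute A (diagonal fun i => d i ^ 2)) : Commute A (diagonal d) := by
  ext i j
  have hij := congrFun (congrFun h i) j
  simp only [mul_diagonal, diagonal_mul] at hij ⊢
  rcases eq_or_ne (A i j) 0 with hA | hA
  · simp [hA]
  · have hsq : d j ^ 2 = d i ^ 2 := mul_left_cancel₀ hA (hij.trans (mul_comm _ _))
    rw [(sq_eq_sq₀ (hd j) (hd i)).mp hsq, mul_comm]

end Matrix

/-- If `D = diag(d₁,…,dₙ,d₁,…,dₙ)` with all `dⱼ > 0` and `U` is a symplectic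
matrix with `Uᵀ D U = D`, then `U` commutes with `J` and is orthogonal; i.e. `U` belongs to
`U(n) = Sp(2n,ℝ) ∩ O(2n,ℝ)`. -/
theorem stmt15 {n : ℕ} (d : Fin n → ℝ) (hd : ∀ j, 0 < d j)
    (U : Matrix (Fin n ⊕ Fin n) (Fin n ⊕ Fin n) ℝ) (hU : IsSymplectic U)
    (hUD : Uᵀ * Matrix.fromBlocks (Matrix.diagonal d) 0 0 (Matrix.diagonal d) * U
        = Matrix.fromBlocks (Matrix.diagonal d) 0 0 (Matrix.diagonal d)) :
    U * stdJ n = stdJ n * U ∧ Uᵀ * U = 1 := by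
  have hJD := commute_stdJ_fromBlocks_diag (diagonal d)
  rw [fromBlocks_diagonal] at hUD hJD
  set b := Sum.elim d d
  have hb : ∀ i, 0 < b i := by rintro (i | i) <;> exact hd i
  have hUJD : Commute U (stdJ n * diagonal b) := by
    simpa [inv_stdJ] using commute_inv_mul_of_transpose_mul_mul_eq (isUnit_stdJ n) hUD hU
  have hJDsq : stdJ n * diagonal b * (stdJ n * diagonal b) = -diagonal fun i => b i ^ 2 := by
    rw [Matrix.mul_assoc, ← Matrix.mul_assoc (diagonal b), ← hJD.eq, Matrix.mul_assoc,
      ← Matrix.mul_assoc, stdJ_mul_self, diagonal_mul_diagonal]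
    simp [sq]
  have hUD' : Commute U (diagonal b) := commute_diagonal_of_commute_diagonal_sq
    (fun i => (hb i).le) (Commute.neg_right_iff.mp (hJDsq ▸ hUJD.mul_right hUJD))
  have hdiag : IsUnit (diagonal b) :=
    isUnit_diagonal.mpr (Pi.isUnit_iff.mpr fun i => (hb i).ne'.isUnit)
  have hUJ : U * stdJ n = stdJ n * U := hdiag.mul_left_inj.mp <| by
    rw [Matrix.mul_assoc, hUJD.eq, Matrix.mul_assoc, ← hUD'.eq, Matrix.mul_assoc]
  refine ⟨hUJ, (isUnit_stdJ n).mul_left_inj.mp ?_⟩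
  rw [Matrix.mul_assoc, hUJ, ← Matrix.mul_assoc, hU, Matrix.one_mul]
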